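/- arXiv:2006.00581 — 2 statements merged into one kernel-verified Lean document; each statement's English description precedes it below -/
import Mathlib

section
/- Every convex transferable-utility cooperative game has a non-empty core. Precisely: let N be a nonempty finite set of players and v : Finset N → ℝ a characteristic function with v(∅) = 0 that is supermodular, i.e. v(S ∪ T) + v(S ∩ T) ≥ v(S) + v(T) for all coalitions S, T ⊆ N. Then there exists a payoff vector x : N → ℝ such that ∑_{i ∈ N} x i = v(N) and ∑_{i ∈ S} x i ≥ v(S) for every coalition S ⊆ N. -/
/-! Order the players and pay each one its marginal contribution to the coalition of its
predecessors; these payments telescope to `v N`. For a coalition `S`, remove its players from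
the last one downwards: supermodularity says that a player's marginal contribution can only grow
when the coalition it joins grows, so what `S` loses at each step is at most the payment of the
removed player, whose predecessors include the rest of `S`. -/

open Finset Function

section MarginalVector

variable {N : Type*} [DecidableEq N]

def marginalContribution (v : Finset N → ℝ) (S : Finset N) (i : N) : ℝ :=
  v (insert i S) - v S

theorem marginalContribution_mono {v : Finset N → ℝ}
    (hv : ∀ S T : Finset N, v S + v T ≤ v (S ∪ T) + v (S ∩ T))
    {A B : Finset N} {i : N} (hAB : A ⊆ B) (hi : i ∉ B) :
    marginalContribution v A i ≤ marginalContribution v B i := by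
  have h := hv (insert i A) B
  rw [insert_union, union_eq_right.2 hAB, insert_inter_of_notMem hi, inter_eq_left.2 hAB] at h
  unfold marginalContribution
  linarith

section Order

variable {α : Type*} [LinearOrder α] {r : N → α}

theorem sum_marginalContribution_filter_lt (hr : Injective r) (v : Finset N → ℝ)
    (s : Finset N) :
    ∑ i ∈ s, marginalContribution v {j ∈ s | r j < r i} i = v s - v ∅ := by
  induction s using Finset.induction_on_max_value r with
  | empty => simp
  | insert a s ha hmax ih =>
    have hlast : {j ∈ insert a s | r j < r a} = s := by
      ext j
      simp only [mem_filter, mem_insert]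
      constructor
      · rintro ⟨rfl | hj, hlt⟩
        exacts [absurd hlt (lt_irrefl _), hj]
      · exact fun hj => ⟨.inr hj, (hmax j hj).lt_of_ne (hr.ne (ne_of_mem_of_not_mem hj ha))⟩
    have hrest : ∀ i ∈ s, {j ∈ insert a s | r j < r i} = {j ∈ s | r j < r i} := fun i hi => by
      rw [filter_insert, if_neg (hmax i hi).not_gt]
    rw [sum_insert ha, hlast, sum_congr rfl fun i hi => by rw [hrest i hi], ih]
    unfold marginalContribution
    ring

variable [Fintype N]

variable (r) in
def marginalVector (v : Finset N → ℝ) (i : N) : ℝ :=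
  marginalContribution v {j | r j < r i} i

theorem sum_marginalVector (hr : Injective r) (v : Finset N → ℝ) :
    ∑ i, marginalVector r v i = v univ - v ∅ :=
  sum_marginalContribution_filter_lt hr v univ

theorem sub_empty_le_sum_marginalVector (hr : Injective r) {v : Finset N → ℝ}
    (hv : ∀ S T : Finset N, v S + v T ≤ v (S ∪ T) + v (S ∩ T)) (S : Finset N) :
    v S - v ∅ ≤ ∑ i ∈ S, marginalVector r v i := by
  induction S using Finset.induction_on_max_value r with
  | empty => simp
  | insert a s ha hmax ih =>
    have hpred : s ⊆ ({j | r j < r a} : Finset N) := fun j hj =>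
      mem_filter.2 ⟨mem_univ j, (hmax j hj).lt_of_ne (hr.ne (ne_of_mem_of_not_mem hj ha))⟩
    have hstep : v (insert a s) - v s ≤ marginalVector r v a :=
      marginalContribution_mono hv hpred (by simp)
    rw [sum_insert ha]
    linarith

end Order

end MarginalVector

theorem convex_game_core_nonempty_general {N : Type*} [Fintype N] [DecidableEq N]
    (v : Finset N → ℝ) (h0 : v ∅ = 0)
    (hconvex : ∀ S T : Finset N, v S + v T ≤ v (S ∪ T) + v (S ∩ T)) :
    ∃ x : N → ℝ, (∑ i, x i = v Finset.univ) ∧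
      ∀ S : Finset N, v S ≤ ∑ i ∈ S, x i := by
  have hr := (Fintype.equivFin N).injective
  refine ⟨marginalVector (Fintype.equivFin N) v, ?_, fun S => ?_⟩
  · simpa [h0] using sum_marginalVector hr v
  · simpa [h0] using sub_empty_le_sum_marginalVector hr hconvex S

/-- Every convex (supermodular) transferable-utility cooperative game has a
non-empty core (Shapley 1971). -/
theorem convex_game_core_nonempty {N : Type*} [Fintype N] [DecidableEq N] [Nonempty N]
    (v : Finset N → ℝ) (h0 : v ∅ = 0)
    (hconvex : ∀ S T : Finset N, v S + v T ≤ v (S ∪ T) + v (S ∩ T)) :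
    ∃ x : N → ℝ, (∑ i, x i = v Finset.univ) ∧
      ∀ S : Finset N, v S ≤ ∑ i ∈ S, x i :=
  convex_game_core_nonempty_general v h0 hconvex
end

section
/- (Paradox of equality.) The unique θ ∈ [0,1] satisfying the balance condition with bargaining weights w₁ = 0.8, w₂ = 0.2 on the efficient frontier θ₂ = 1 − θ², i.e. the unique θ ∈ [0,1] with 4·θ − 3 = 1 − θ², is θ = 2·√2 − 2; moreover 2·√2 − 2 < 1, so even with the employees holding four times the bargaining power of the firm, the best compromise solution does not attain maximum equality θ = 1. -/
/-!
With weight ratio `k = w₁ / w₂`, balance on the frontier `θ₂ = 1 − θ₁²` is the quadratic equation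
`θ² = k (1 − θ)`. Its left side is below its right side at `θ = 0` and above it at `θ = 1`, so its
unique nonnegative root lies strictly below `1` for every `k ≥ 0`; for `k = 4` it is `2√2 − 2`.
-/

open Real

noncomputable def balancedEquality (k : ℝ) : ℝ := (√(k ^ 2 + 4 * k) - k) / 2

variable {k : ℝ}

theorem balancedEquality_sq (hk : 0 ≤ k) :
    balancedEquality k ^ 2 = k * (1 - balancedEquality k) := by
  unfold balancedEquality
  linear_combination (1 / 4 : ℝ) * sq_sqrt (by positivity : 0 ≤ k ^ 2 + 4 * k)

theorem balancedEquality_nonneg (hk : 0 ≤ k) : 0 ≤ balancedEquality k := by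
  have : k ≤ √(k ^ 2 + 4 * k) := le_sqrt_of_sq_le (by linarith)
  unfold balancedEquality
  linarith

theorem balancedEquality_lt_one (hk : 0 ≤ k) : balancedEquality k < 1 := by
  have : √(k ^ 2 + 4 * k) < k + 2 := (sqrt_lt' (by linarith)).2 (by nlinarith)
  unfold balancedEquality
  linarith

theorem sq_eq_mul_one_sub_iff {θ : ℝ} (hk : 0 ≤ k) (hθ : 0 ≤ θ) :
    θ ^ 2 = k * (1 - θ) ↔ θ = balancedEquality k := by
  set b := balancedEquality k
  have hb := balancedEquality_nonneg hk
  refine ⟨fun h => ?_, fun h => h ▸ balancedEquality_sq hk⟩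
  have hfactor : (θ - b) * (θ + b + k) = 0 := by
    linear_combination h - balancedEquality_sq hk
  rcases mul_eq_zero.1 hfactor with hroot | hsum <;> linarith

theorem balancedEquality_four : balancedEquality 4 = 2 * √2 - 2 := by
  have h32 : √((4 : ℝ) ^ 2 + 4 * 4) = 4 * √2 := by
    rw [show (4 : ℝ) ^ 2 + 4 * 4 = 4 ^ 2 * 2 by norm_num, sqrt_mul' _ zero_le_two,
      sqrt_sq (by norm_num)]
  rw [balancedEquality, h32]
  ring

/-- Paradox of equality: the unique `θ ∈ [0,1]` with `4θ − 3 = 1 − θ²`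
is `θ = 2√2 − 2`, which is strictly less than `1`. -/
theorem paradox_of_equality_bargaining :
    (∀ θ : ℝ, θ ∈ Set.Icc (0:ℝ) 1 → ((4 * θ - 3 = 1 - θ ^ 2) ↔ θ = 2 * Real.sqrt 2 - 2)) ∧
      (2 * Real.sqrt 2 - 2) ∈ Set.Icc (0:ℝ) 1 ∧
      2 * Real.sqrt 2 - 2 < 1 := by
  have hk : (0 : ℝ) ≤ 4 := by norm_num
  have hlt := balancedEquality_lt_one hk
  rw [balancedEquality_four] at hlt
  refine ⟨fun θ hθ => ?_, ⟨balancedEquality_four ▸ balancedEquality_nonneg hk, hlt.le⟩, hlt⟩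
  rw [← balancedEquality_four, ← sq_eq_mul_one_sub_iff hk hθ.1]
  constructor <;> intro h <;> linarith
end
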